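/- Let 0 < r < R and let k ≥ 0 be an integer. There exist constants C > 0 and κ > 0 such that for every t ≥ 0 and every measurable function w : ℝ³ → ℝ⁴ with ∫_{ℝ³} ‖w(ξ)‖² dξ < ∞, one has (∫_{{r ≤ |ξ| ≤ R}} |ξ|^{2k} ‖exp(−t·J(|ξ|)) w(ξ)‖² dξ)^{1/2} ≤ C e^{−κ t} (∫_{ℝ³} ‖w(ξ)‖² dξ)^{1/2}, where ‖·‖ denotes the Euclidean norm on ℝ⁴. -/

import Mathlib

/-!
On the annulus the symbol `J s` is only partially dissipative: its first component is not damped,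
so `exp (-(t • J s))` decays by hypocoercivity. The symmetric matrix `P = lyapunovMatrix s`, a
diagonal weight corrected by the cross term `-s³` between the first two components, is equivalent
to the identity, `7/2 ≤ P ≤ 21 (1 + s²)²`, while `(J s)ᵀ P + P J s ≥ s⁴`. Hence `x ⬝ᵥ P *ᵥ x`
decays along the flow at the rate `r⁴ / (21 (1 + R²)²)`, uniformly on `r ≤ s ≤ R`, and the
resulting pointwise bound, with the weight `|ξ|^k ≤ max 1 R ^ k`, integrates to the `L²` estimate.
-/

open MeasureTheory
open scoped NNReal ENNReal Matrix

/-- The Fourier symbol of the linearized diffusion-approximation radiation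
hydrodynamics system at frequency of modulus `s`. -/
noncomputable def J (s : ℝ) : Matrix (Fin 4) (Fin 4) ℝ :=
  !![0, s, 0, 0;
     -s, 3 * s ^ 2, -s, -s;
     0, s, s ^ 2 + 4, -1;
     0, 0, -4, s ^ 2 + 1]

open NormedSpace

section Lyapunov

variable {n : Type*} [Fintype n] [DecidableEq n]

theorem hasDerivAt_exp_smul_mulVec (A : Matrix n n ℝ) (v : n → ℝ) (t : ℝ) :
    HasDerivAt (fun τ : ℝ => exp (τ • A) *ᵥ v) (A *ᵥ (exp (t • A) *ᵥ v)) t := by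
  let _ : NormedRing (Matrix n n ℝ) := Matrix.linftyOpNormedRing
  let _ : NormedAlgebra ℝ (Matrix n n ℝ) := Matrix.linftyOpNormedAlgebra
  have h := (LinearMap.applyₗ v ∘ₗ Matrix.toLin'.toLinearMap).toContinuousLinearMap.hasFDerivAt
    |>.comp_hasDerivAt t (hasDerivAt_exp_smul_const' A t)
  simp only [LinearMap.coe_toContinuousLinearMap', Function.comp_def] at h
  exact h.congr_deriv (by rw [Matrix.mulVec_mulVec]; rfl)

theorem HasDerivAt.dotProduct_mulVec {u : ℝ → n → ℝ} {u' : n → ℝ} {t : ℝ}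
    (hu : HasDerivAt u u' t) (P : Matrix n n ℝ) :
    HasDerivAt (fun τ => u τ ⬝ᵥ P *ᵥ u τ) (u' ⬝ᵥ P *ᵥ u t + u t ⬝ᵥ P *ᵥ u') t := by
  have hPu := (Matrix.toLin' P).toContinuousLinearMap.hasFDerivAt.comp_hasDerivAt t hu
  simp only [LinearMap.coe_toContinuousLinearMap', Function.comp_def,
    Matrix.toLin'_apply] at hPu
  have := HasDerivAt.fun_sum fun i (_ : i ∈ Finset.univ) =>
    (hasDerivAt_pi.1 hu i).mul (hasDerivAt_pi.1 hPu i)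
  simpa [dotProduct, add_mul, Finset.sum_add_distrib] using this

theorem hasDerivAt_dotProduct_mulVec_exp_neg_smul (A P : Matrix n n ℝ) (v : n → ℝ) (t : ℝ) :
    HasDerivAt (fun τ : ℝ => exp (-(τ • A)) *ᵥ v ⬝ᵥ P *ᵥ (exp (-(τ • A)) *ᵥ v))
      (-(A *ᵥ (exp (-(t • A)) *ᵥ v) ⬝ᵥ P *ᵥ (exp (-(t • A)) *ᵥ v)
        + exp (-(t • A)) *ᵥ v ⬝ᵥ P *ᵥ (A *ᵥ (exp (-(t • A)) *ᵥ v)))) t := by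
  simp only [← smul_neg]
  refine ((hasDerivAt_exp_smul_mulVec (-A) v t).dotProduct_mulVec P).congr_deriv ?_
  simp only [Matrix.neg_mulVec, Matrix.mulVec_neg, neg_dotProduct, dotProduct_neg]
  ring

theorem dotProduct_mulVec_exp_neg_smul_le {A P : Matrix n n ℝ} {κ : ℝ}
    (hdiss : ∀ x, κ * (x ⬝ᵥ P *ᵥ x) ≤ A *ᵥ x ⬝ᵥ P *ᵥ x + x ⬝ᵥ P *ᵥ (A *ᵥ x))
    {t : ℝ} (ht : 0 ≤ t) (v : n → ℝ) :
    exp (-(t • A)) *ᵥ v ⬝ᵥ P *ᵥ (exp (-(t • A)) *ᵥ v) ≤ Real.exp (-κ * t) * (v ⬝ᵥ P *ᵥ v) := by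
  set E : ℝ → ℝ := fun τ => exp (-(τ • A)) *ᵥ v ⬝ᵥ P *ᵥ (exp (-(τ • A)) *ᵥ v)
  have hF : ∀ τ, HasDerivAt (fun τ => Real.exp (κ * τ) * E τ)
      (κ * Real.exp (κ * τ) * E τ + Real.exp (κ * τ) *
        -(A *ᵥ (exp (-(τ • A)) *ᵥ v) ⬝ᵥ P *ᵥ (exp (-(τ • A)) *ᵥ v)
          + exp (-(τ • A)) *ᵥ v ⬝ᵥ P *ᵥ (A *ᵥ (exp (-(τ • A)) *ᵥ v)))) τ := fun τ => by
    have hexp : HasDerivAt (fun τ => Real.exp (κ * τ)) (κ * Real.exp (κ * τ)) τ := by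
      simpa [mul_comm] using ((hasDerivAt_id τ).const_mul κ).exp
    exact hexp.mul (hasDerivAt_dotProduct_mulVec_exp_neg_smul A P v τ)
  have hanti : Antitone fun τ => Real.exp (κ * τ) * E τ := by
    refine antitone_of_deriv_nonpos (fun τ => (hF τ).differentiableAt) fun τ => ?_
    rw [(hF τ).deriv]
    nlinarith [hdiss (exp (-(τ • A)) *ᵥ v), Real.exp_pos (κ * τ)]
  have h := hanti ht
  simp only [mul_zero, Real.exp_zero, one_mul, zero_smul, neg_zero, exp_zero, Matrix.one_mulVec,
    E] at h
  rw [neg_mul, Real.exp_neg, ← div_eq_inv_mul, le_div_iff₀' (Real.exp_pos _)]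
  exact h

theorem dotProduct_self_exp_neg_smul_mulVec_le {A P : Matrix n n ℝ} {α β κ : ℝ} (hα : 0 < α)
    (hlower : ∀ x, α * (x ⬝ᵥ x) ≤ x ⬝ᵥ P *ᵥ x) (hupper : ∀ x, x ⬝ᵥ P *ᵥ x ≤ β * (x ⬝ᵥ x))
    (hdiss : ∀ x, κ * (x ⬝ᵥ P *ᵥ x) ≤ A *ᵥ x ⬝ᵥ P *ᵥ x + x ⬝ᵥ P *ᵥ (A *ᵥ x))
    {t : ℝ} (ht : 0 ≤ t) (v : n → ℝ) :
    exp (-(t • A)) *ᵥ v ⬝ᵥ exp (-(t • A)) *ᵥ v ≤ β / α * Real.exp (-κ * t) * (v ⬝ᵥ v) := by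
  rw [mul_right_comm, div_mul_eq_mul_div, div_mul_eq_mul_div, le_div_iff₀' hα]
  calc α * (exp (-(t • A)) *ᵥ v ⬝ᵥ exp (-(t • A)) *ᵥ v)
      ≤ exp (-(t • A)) *ᵥ v ⬝ᵥ P *ᵥ (exp (-(t • A)) *ᵥ v) := hlower _
    _ ≤ Real.exp (-κ * t) * (v ⬝ᵥ P *ᵥ v) := dotProduct_mulVec_exp_neg_smul_le hdiss ht v
    _ ≤ Real.exp (-κ * t) * (β * (v ⬝ᵥ v)) := by gcongr; exact hupper v
    _ = β * (v ⬝ᵥ v) * Real.exp (-κ * t) := by ring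

end Lyapunov

noncomputable def lyapunovMatrix (s : ℝ) : Matrix (Fin 4) (Fin 4) ℝ :=
  !![4 * (1 + s ^ 2) ^ 2, -s ^ 3, 0, 0;
     -s ^ 3, 4 * (1 + s ^ 2) ^ 2, 0, 0;
     0, 0, 20 * (1 + s ^ 2) ^ 2, 0;
     0, 0, 0, 5 * (1 + s ^ 2) ^ 2]

theorem dotProduct_self_fin_four (x : Fin 4 → ℝ) :
    x ⬝ᵥ x = x 0 ^ 2 + x 1 ^ 2 + x 2 ^ 2 + x 3 ^ 2 := by
  simp only [dotProduct, Fin.sum_univ_four]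
  ring

theorem dotProduct_lyapunovMatrix_mulVec (s : ℝ) (x : Fin 4 → ℝ) :
    x ⬝ᵥ lyapunovMatrix s *ᵥ x = 4 * (1 + s ^ 2) ^ 2 * (x 0 ^ 2 + x 1 ^ 2) - 2 * s ^ 3 * x 0 * x 1
      + 20 * (1 + s ^ 2) ^ 2 * x 2 ^ 2 + 5 * (1 + s ^ 2) ^ 2 * x 3 ^ 2 := by
  simp only [lyapunovMatrix, dotProduct, Matrix.mulVec, Matrix.of_apply, Matrix.cons_val',
    Matrix.cons_val_fin_one, Fin.sum_univ_four, Matrix.cons_val_zero, Matrix.cons_val_one,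
    Matrix.cons_val]
  ring

theorem neg_two_mul_pow_three_mul_mul_le (s a b : ℝ) :
    -(2 * s ^ 3 * a * b) ≤ (s ^ 2 + s ^ 4) / 2 * (a ^ 2 + b ^ 2) := by
  nlinarith [mul_nonneg (sq_nonneg s) (add_nonneg (sq_nonneg (a + s * b)) (sq_nonneg (s * a + b)))]

theorem le_dotProduct_lyapunovMatrix_mulVec (s : ℝ) (x : Fin 4 → ℝ) :
    7 / 2 * (x ⬝ᵥ x) ≤ x ⬝ᵥ lyapunovMatrix s *ᵥ x := by
  rw [dotProduct_self_fin_four, dotProduct_lyapunovMatrix_mulVec]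
  nlinarith [neg_two_mul_pow_three_mul_mul_le s (x 0) (x 1),
    mul_nonneg (sq_nonneg s) (sq_nonneg (x 0)), mul_nonneg (sq_nonneg s) (sq_nonneg (x 1)),
    mul_nonneg (sq_nonneg s) (sq_nonneg (x 2)), mul_nonneg (sq_nonneg s) (sq_nonneg (x 3)),
    mul_nonneg (sq_nonneg (s ^ 2)) (sq_nonneg (x 0)),
    mul_nonneg (sq_nonneg (s ^ 2)) (sq_nonneg (x 1)),
    mul_nonneg (sq_nonneg (s ^ 2)) (sq_nonneg (x 2)),
    mul_nonneg (sq_nonneg (s ^ 2)) (sq_nonneg (x 3))]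

theorem dotProduct_lyapunovMatrix_mulVec_le (s : ℝ) (x : Fin 4 → ℝ) :
    x ⬝ᵥ lyapunovMatrix s *ᵥ x ≤ 21 * (1 + s ^ 2) ^ 2 * (x ⬝ᵥ x) := by
  rw [dotProduct_self_fin_four, dotProduct_lyapunovMatrix_mulVec]
  nlinarith [neg_two_mul_pow_three_mul_mul_le (-s) (x 0) (x 1),
    mul_nonneg (sq_nonneg s) (sq_nonneg (x 0)), mul_nonneg (sq_nonneg s) (sq_nonneg (x 1)),
    mul_nonneg (sq_nonneg s) (sq_nonneg (x 2)), mul_nonneg (sq_nonneg s) (sq_nonneg (x 3)),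
    mul_nonneg (sq_nonneg (s ^ 2)) (sq_nonneg (x 0)),
    mul_nonneg (sq_nonneg (s ^ 2)) (sq_nonneg (x 1)),
    mul_nonneg (sq_nonneg (s ^ 2)) (sq_nonneg (x 2)),
    mul_nonneg (sq_nonneg (s ^ 2)) (sq_nonneg (x 3))]

theorem le_lyapunovMatrix_dissipation (s : ℝ) (x : Fin 4 → ℝ) :
    s ^ 4 * (x ⬝ᵥ x) ≤
      J s *ᵥ x ⬝ᵥ lyapunovMatrix s *ᵥ x + x ⬝ᵥ lyapunovMatrix s *ᵥ (J s *ᵥ x) := by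
  set D : ℝ := 86016 + 516864*s^2 + 1264800*s^4 + 1623336*s^6 + 1173846*s^8
      + 477615*s^10 + 102135*s^12 + 9000*s^14
  have hD : 0 < D := by positivity
  -- An LDLᵀ decomposition of the Gram matrix of the difference, with denominators cleared by `D`.
  have hLDL : D * (J s *ᵥ x ⬝ᵥ lyapunovMatrix s *ᵥ x + x ⬝ᵥ lyapunovMatrix s *ᵥ (J s *ᵥ x)
      - s ^ 4 * (x ⬝ᵥ x))
      = s^4*D*(x 0 - 3*s*(x 1) + x 2 + x 3)^2
      + (3584 + 14816*s^2 + 22680*s^4 + 15854*s^6 + 5009*s^8 + 600*s^10)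
        * ((24*s+45*s^3+15*s^5)*(x 1) + (16+32*s^2+19*s^4)*(x 2) - (4+8*s^2+s^4)*(x 3))^2
      + ((3584 + 14816*s^2 + 22680*s^4 + 15854*s^6 + 5009*s^8 + 600*s^10)*(x 2)
          - (896 + 3464*s^2 + 4836*s^4 + 2861*s^6 + 596*s^8)*(x 3))^2
      + (1075200*s^2 + 8327808*s^4 + 28049712*s^6 + 53777244*s^8 + 64442898*s^10
          + 49825623*s^12 + 24716220*s^14 + 7536105*s^16 + 1272750*s^18 + 90000*s^20)*(x 3)^2 := by
    simp only [J, lyapunovMatrix, dotProduct, Matrix.mulVec, Matrix.of_apply, Matrix.cons_val',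
      Matrix.cons_val_fin_one, Fin.sum_univ_four, Matrix.cons_val_zero, Matrix.cons_val_one,
      Matrix.cons_val, D]
    ring
  have : 0 ≤ D * (J s *ᵥ x ⬝ᵥ lyapunovMatrix s *ᵥ x + x ⬝ᵥ lyapunovMatrix s *ᵥ (J s *ᵥ x)
      - s ^ 4 * (x ⬝ᵥ x)) := by
    rw [hLDL]; positivity
  exact sub_nonneg.1 (nonneg_of_mul_nonneg_right this hD)

theorem dotProduct_self_exp_neg_smul_J_mulVec_le {r R s t : ℝ} (hr : 0 ≤ r) (hrs : r ≤ s)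
    (hsR : s ≤ R) (ht : 0 ≤ t) (v : Fin 4 → ℝ) :
    exp (-(t • J s)) *ᵥ v ⬝ᵥ exp (-(t • J s)) *ᵥ v ≤
      6 * (1 + R ^ 2) ^ 2 * Real.exp (-(r ^ 4 / (21 * (1 + R ^ 2) ^ 2)) * t) * (v ⬝ᵥ v) := by
  have hs : 0 ≤ s := hr.trans hrs
  have hupper (x : Fin 4 → ℝ) :
      x ⬝ᵥ lyapunovMatrix s *ᵥ x ≤ 21 * (1 + R ^ 2) ^ 2 * (x ⬝ᵥ x) := by
    refine (dotProduct_lyapunovMatrix_mulVec_le s x).trans ?_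
    rw [dotProduct_self_fin_four]
    gcongr
  have hdiss (x : Fin 4 → ℝ) : r ^ 4 / (21 * (1 + R ^ 2) ^ 2) * (x ⬝ᵥ lyapunovMatrix s *ᵥ x) ≤
      J s *ᵥ x ⬝ᵥ lyapunovMatrix s *ᵥ x + x ⬝ᵥ lyapunovMatrix s *ᵥ (J s *ᵥ x) :=
    calc r ^ 4 / (21 * (1 + R ^ 2) ^ 2) * (x ⬝ᵥ lyapunovMatrix s *ᵥ x)
        ≤ r ^ 4 / (21 * (1 + R ^ 2) ^ 2) * (21 * (1 + R ^ 2) ^ 2 * (x ⬝ᵥ x)) := by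
          gcongr; exact hupper x
      _ = r ^ 4 * (x ⬝ᵥ x) := by field_simp
      _ ≤ s ^ 4 * (x ⬝ᵥ x) := by rw [dotProduct_self_fin_four]; gcongr
      _ ≤ _ := le_lyapunovMatrix_dissipation s x
  calc _ ≤ 21 * (1 + R ^ 2) ^ 2 / (7 / 2) * Real.exp (-(r ^ 4 / (21 * (1 + R ^ 2) ^ 2)) * t)
        * (v ⬝ᵥ v) :=
        dotProduct_self_exp_neg_smul_mulVec_le (by norm_num) (le_dotProduct_lyapunovMatrix_mulVec s)
          hupper hdiss ht v
    _ = _ := by ring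

theorem EuclideanSpace.norm_sq_eq_dotProduct {ι : Type*} [Fintype ι] (x : EuclideanSpace ℝ ι) :
    ‖x‖ ^ 2 = EuclideanSpace.equiv ι ℝ x ⬝ᵥ EuclideanSpace.equiv ι ℝ x := by
  rw [EuclideanSpace.norm_sq_eq]
  simp only [sq, Real.norm_eq_abs, abs_mul_abs_self, dotProduct]
  rfl

theorem norm_exp_neg_smul_J_mulVec_le {r R s t : ℝ} (hr : 0 ≤ r) (hrs : r ≤ s) (hsR : s ≤ R)
    (ht : 0 ≤ t) (v : EuclideanSpace ℝ (Fin 4)) :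
    ‖(EuclideanSpace.equiv (Fin 4) ℝ).symm
        (exp (-(t • J s)) *ᵥ EuclideanSpace.equiv (Fin 4) ℝ v)‖ ≤
      3 * (1 + R ^ 2) * Real.exp (-(r ^ 4 / (42 * (1 + R ^ 2) ^ 2)) * t) * ‖v‖ := by
  rw [← pow_le_pow_iff_left₀ (norm_nonneg _) (by positivity) two_ne_zero, mul_pow,
    EuclideanSpace.norm_sq_eq_dotProduct, EuclideanSpace.norm_sq_eq_dotProduct,
    ContinuousLinearEquiv.apply_symm_apply]
  have hexp : Real.exp (-(r ^ 4 / (42 * (1 + R ^ 2) ^ 2)) * t) ^ 2 =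
      Real.exp (-(r ^ 4 / (21 * (1 + R ^ 2) ^ 2)) * t) := by
    rw [sq, ← Real.exp_add]
    congr 1
    field_simp
    ring
  calc _ ≤ 6 * (1 + R ^ 2) ^ 2 * Real.exp (-(r ^ 4 / (21 * (1 + R ^ 2) ^ 2)) * t)
        * (EuclideanSpace.equiv (Fin 4) ℝ v ⬝ᵥ EuclideanSpace.equiv (Fin 4) ℝ v) :=
        dotProduct_self_exp_neg_smul_J_mulVec_le hr hrs hsR ht _
    _ ≤ _ := by
      rw [mul_pow, mul_pow, hexp]
      gcongr
      · rw [← EuclideanSpace.norm_sq_eq_dotProduct]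
        positivity
      · norm_num

theorem setLIntegral_rpow_half_le {α : Type*} [MeasurableSpace α] {μ : Measure α} {s : Set α}
    (hs : MeasurableSet s) {f g : α → ℝ≥0∞} {c : ℝ≥0∞} (hc : c ≠ ⊤)
    (hfg : ∀ x ∈ s, f x ≤ (c * g x) ^ 2) :
    (∫⁻ x in s, f x ∂μ) ^ (1 / 2 : ℝ) ≤ c * (∫⁻ x, g x ^ 2 ∂μ) ^ (1 / 2 : ℝ) :=
  calc (∫⁻ x in s, f x ∂μ) ^ (1 / 2 : ℝ)
      ≤ (∫⁻ x in s, c ^ 2 * g x ^ 2 ∂μ) ^ (1 / 2 : ℝ) := by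
        gcongr ?_ ^ _
        exact setLIntegral_mono' hs fun x hx => (hfg x hx).trans_eq (mul_pow _ _ _)
    _ ≤ (c ^ 2 * ∫⁻ x, g x ^ 2 ∂μ) ^ (1 / 2 : ℝ) := by
        rw [lintegral_const_mul' _ _ (ENNReal.pow_ne_top hc)]
        gcongr (c ^ 2 * ?_) ^ _
        exact setLIntegral_le_lintegral s _
    _ = c * (∫⁻ x, g x ^ 2 ∂μ) ^ (1 / 2 : ℝ) := by
        rw [ENNReal.mul_rpow_of_nonneg _ _ (by norm_num), ← ENNReal.rpow_natCast,
          ← ENNReal.rpow_mul]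
        norm_num

theorem medium_frequency_semigroup_decay_general (r R : ℝ) (hr : 0 < r) (k : ℕ) :
    ∃ C κ : ℝ, 0 < C ∧ 0 < κ ∧ ∀ t : ℝ, 0 ≤ t →
      ∀ w : EuclideanSpace ℝ (Fin 3) → EuclideanSpace ℝ (Fin 4), Measurable w →
      (∫⁻ ξ, (‖w ξ‖₊ : ℝ≥0∞) ^ 2) < ⊤ →
      (∫⁻ ξ in {ξ : EuclideanSpace ℝ (Fin 3) | r ≤ ‖ξ‖ ∧ ‖ξ‖ ≤ R},
          (‖ξ‖₊ : ℝ≥0∞) ^ (2 * k) *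
            (‖(EuclideanSpace.equiv (Fin 4) ℝ).symm
                (NormedSpace.exp (-(t • J ‖ξ‖)) *ᵥ
                  EuclideanSpace.equiv (Fin 4) ℝ (w ξ))‖₊ : ℝ≥0∞) ^ 2) ^ (1 / 2 : ℝ) ≤
        ENNReal.ofReal (C * Real.exp (-κ * t)) *
          (∫⁻ ξ, (‖w ξ‖₊ : ℝ≥0∞) ^ 2) ^ (1 / 2 : ℝ) := by
  refine ⟨3 * (1 + R ^ 2) * max 1 R ^ k, r ^ 4 / (42 * (1 + R ^ 2) ^ 2), by positivity,
    by positivity, fun t ht w _ _ => ?_⟩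
  have hannulus : MeasurableSet {ξ : EuclideanSpace ℝ (Fin 3) | r ≤ ‖ξ‖ ∧ ‖ξ‖ ≤ R} :=
    (measurableSet_le measurable_const measurable_norm).inter
      (measurableSet_le measurable_norm measurable_const)
  refine setLIntegral_rpow_half_le hannulus ENNReal.ofReal_ne_top fun ξ ⟨hrξ, hξR⟩ => ?_
  set y := (EuclideanSpace.equiv (Fin 4) ℝ).symm
    (exp (-(t • J ‖ξ‖)) *ᵥ EuclideanSpace.equiv (Fin 4) ℝ (w ξ))
  have hbound : ‖ξ‖ ^ k * ‖y‖ ≤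
      3 * (1 + R ^ 2) * max 1 R ^ k * Real.exp (-(r ^ 4 / (42 * (1 + R ^ 2) ^ 2)) * t) * ‖w ξ‖ :=
    calc ‖ξ‖ ^ k * ‖y‖
        ≤ max 1 R ^ k * (3 * (1 + R ^ 2) * Real.exp (-(r ^ 4 / (42 * (1 + R ^ 2) ^ 2)) * t)
          * ‖w ξ‖) := by
          gcongr
          · exact hξR.trans (le_max_right 1 R)
          · exact norm_exp_neg_smul_J_mulVec_le hr.le hrξ hξR ht (w ξ)
      _ = _ := by ring
  have hbound' := ENNReal.ofReal_le_ofReal hbound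
  rw [ENNReal.ofReal_mul (by positivity), ENNReal.ofReal_mul (by positivity),
    ENNReal.ofReal_pow (norm_nonneg _), ofReal_norm, ofReal_norm, ofReal_norm] at hbound'
  rw [mul_comm 2 k, pow_mul, ← mul_pow]
  exact pow_le_pow_left₀ zero_le hbound' 2

/-- For `0 < r < R` and `k ≥ 0` there are `C, κ > 0` such that for every `t ≥ 0` and every
square-integrable measurable `w : ℝ³ → ℝ⁴`,
`(∫_{r≤|ξ|≤R} |ξ|^{2k} ‖exp(−t J(|ξ|)) w(ξ)‖² dξ)^{1/2} ≤ C e^{−κt} (∫ ‖w(ξ)‖² dξ)^{1/2}`. -/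
theorem medium_frequency_semigroup_decay (r R : ℝ) (hr : 0 < r) (hrR : r < R) (k : ℕ) :
    ∃ C κ : ℝ, 0 < C ∧ 0 < κ ∧ ∀ t : ℝ, 0 ≤ t →
      ∀ w : EuclideanSpace ℝ (Fin 3) → EuclideanSpace ℝ (Fin 4), Measurable w →
      (∫⁻ ξ, (‖w ξ‖₊ : ℝ≥0∞) ^ 2) < ⊤ →
      (∫⁻ ξ in {ξ : EuclideanSpace ℝ (Fin 3) | r ≤ ‖ξ‖ ∧ ‖ξ‖ ≤ R},
          (‖ξ‖₊ : ℝ≥0∞) ^ (2 * k) *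
            (‖(EuclideanSpace.equiv (Fin 4) ℝ).symm
                (NormedSpace.exp (-(t • J ‖ξ‖)) *ᵥ
                  EuclideanSpace.equiv (Fin 4) ℝ (w ξ))‖₊ : ℝ≥0∞) ^ 2) ^ (1 / 2 : ℝ) ≤
        ENNReal.ofReal (C * Real.exp (-κ * t)) *
          (∫⁻ ξ, (‖w ξ‖₊ : ℝ≥0∞) ^ 2) ^ (1 / 2 : ℝ) :=
  medium_frequency_semigroup_decay_general r R hr k
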